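/- arXiv:1905.07957 — 2 statements merged into one kernel-verified Lean document; each statement's English description precedes it below -/
import Mathlib

section
/- For a finite group G, the number α_{G,n} of simultaneous conjugacy classes of n-tuples satisfies α_{G,n} ~ |Z(G)| · |G|^{n−1} as n → ∞, i.e., lim_{n→∞} α_{G,n} / (|Z(G)| |G|^{n−1}) = 1. -/
/-!
Burnside's lemma for the conjugation action on `G^n` gives `α_{G,n} |G| = ∑_g |C_G(g)|^n`, i.e.
`α_{G,n} / |G|^(n-1) = ∑_g (|C_G(g)| / |G|)^n`. Every ratio `|C_G(g)| / |G|` lies in `[0, 1]` and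
equals `1` exactly when `g` is central, so the sum tends to `|Z(G)|`.
-/

/-- Number of orbits of `G` acting on `G^n` by simultaneous conjugation. -/
noncomputable def alphaOrbits (G : Type*) [Group G] (n : ℕ) : ℕ :=
  Nat.card (Quotient (MulAction.orbitRel (ConjAct G) (Fin n → G)))

/-- Pairwise commuting `n`-tuples as a sub-`MulAction` of the conjugation action. -/
def commTuples (G : Type*) [Group G] (n : ℕ) : SubMulAction (ConjAct G) (Fin n → G) where
  carrier := {x | ∀ i j, Commute (x i) (x j)}
  smul_mem' := by
    intro g x hx i j
    have h := (hx i j).map (MulAut.conj (ConjAct.ofConjAct g)).toMonoidHom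
    simpa [ConjAct.smul_def, MulAut.conj_apply, mul_assoc] using h

/-- Number of orbits of `G` acting on pairwise-commuting `n`-tuples by
simultaneous conjugation. -/
noncomputable def betaOrbits (G : Type*) [Group G] (n : ℕ) : ℕ :=
  Nat.card (Quotient (MulAction.orbitRel (ConjAct G) (commTuples G n)))

open MulAction Filter Topology

theorem MulAction.card_orbits_mul_card_eq_sum_card_fixedBy (G X : Type*) [Group G] [MulAction G X]
    [Fintype G] [Finite X] :
    Nat.card (Quotient (orbitRel G X)) * Nat.card G = ∑ g : G, Nat.card (fixedBy X g) := by
  classical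
  have := Fintype.ofFinite X
  simp only [Nat.card_eq_fintype_card]
  exact (sum_card_fixedBy_eq_card_orbits_mul_card_group G X).symm

theorem card_fixedBy_conjAct_pi (ι G : Type*) [Finite ι] [Group G] (g : G) :
    Nat.card (fixedBy (ι → G) (ConjAct.toConjAct g)) =
      Nat.card (Subgroup.centralizer {g}) ^ Nat.card ι := by
  rw [← Nat.card_fun]
  refine Nat.card_congr ((Equiv.subtypeEquivRight fun x => ?_).trans (Equiv.subtypePiEquivPi
    (p := fun _ a => a ∈ Subgroup.centralizer {g})))
  simp only [mem_fixedBy, funext_iff, Pi.smul_apply, ConjAct.toConjAct_smul,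
    Subgroup.mem_centralizer_singleton_iff]
  exact forall_congr' fun i => mul_inv_eq_iff_eq_mul.trans eq_comm

theorem alphaOrbits_mul_card (G : Type*) [Group G] [Fintype G] (n : ℕ) :
    alphaOrbits G n * Nat.card G = ∑ g : G, Nat.card (Subgroup.centralizer {g}) ^ n := by
  rw [alphaOrbits, Nat.card_congr (ConjAct.toConjAct (G := G)).toEquiv,
    card_orbits_mul_card_eq_sum_card_fixedBy]
  refine Fintype.sum_equiv ConjAct.ofConjAct.toEquiv _ _ fun g => ?_
  rw [← ConjAct.toConjAct_ofConjAct g, card_fixedBy_conjAct_pi, Nat.card_fin]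
  rfl

theorem Subgroup.card_centralizer_eq_card_iff {G : Type*} [Group G] [Finite G] {g : G} :
    Nat.card (Subgroup.centralizer {g}) = Nat.card G ↔ g ∈ Subgroup.center G :=
  (Subgroup.card_eq_iff_eq_top _).trans
    (Subgroup.centralizer_eq_top_iff_subset.trans Set.singleton_subset_iff)

theorem tendsto_pow_atTop_nhds_ite {x : ℝ} (h0 : 0 ≤ x) (h1 : x ≤ 1) :
    Tendsto (fun n : ℕ => x ^ n) atTop (𝓝 (if x = 1 then 1 else 0)) := by
  split_ifs with hx
  · simp [hx]
  · exact tendsto_pow_atTop_nhds_zero_of_lt_one h0 (lt_of_le_of_ne h1 hx)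

theorem tendsto_sum_pow_atTop_card_eq_one {ι : Type*} (s : Finset ι) {x : ι → ℝ}
    (h0 : ∀ i ∈ s, 0 ≤ x i) (h1 : ∀ i ∈ s, x i ≤ 1) :
    Tendsto (fun n : ℕ => ∑ i ∈ s, x i ^ n) atTop (𝓝 ((s.filter fun i => x i = 1).card : ℝ)) := by
  rw [Finset.natCast_card_filter]
  exact tendsto_finsetSum s fun i hi => tendsto_pow_atTop_nhds_ite (h0 i hi) (h1 i hi)

theorem alphaOrbits_div_card_pow (G : Type*) [Group G] [Fintype G] {n : ℕ} (hn : 1 ≤ n) :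
    (alphaOrbits G n : ℝ) / (Nat.card G : ℝ) ^ (n - 1) =
      ∑ g : G, ((Nat.card (Subgroup.centralizer {g}) : ℝ) / Nat.card G) ^ n := by
  obtain ⟨m, rfl⟩ := Nat.exists_eq_add_of_le' hn
  have hq : (Nat.card G : ℝ) ≠ 0 := mod_cast Nat.card_pos.ne'
  have h := congrArg (Nat.cast (R := ℝ)) (alphaOrbits_mul_card G (m + 1))
  push_cast at h
  simp_rw [div_pow, ← Finset.sum_div, ← h, Nat.add_sub_cancel, pow_succ, mul_div_mul_right _ _ hq]

theorem card_filter_card_centralizer_div_eq_one (G : Type*) [Group G] [Fintype G] :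
    ((Finset.univ.filter fun g : G =>
        (Nat.card (Subgroup.centralizer {g}) : ℝ) / Nat.card G = 1).card : ℝ) =
      Nat.card (Subgroup.center G) := by
  classical
  have hq : (Nat.card G : ℝ) ≠ 0 := mod_cast Nat.card_pos.ne'
  rw [Nat.card_eq_fintype_card (α := Subgroup.center G), Fintype.card_subtype]
  exact congrArg (fun s : Finset G => (s.card : ℝ)) (Finset.filter_congr fun g _ => by
    rw [div_eq_one_iff_eq hq, Nat.cast_inj, Subgroup.card_centralizer_eq_card_iff])

/-- `α_{G,n} ∼ |Z(G)|·|G|^{n-1}` as `n → ∞`. -/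
theorem alpha_asymptotic (G : Type*) [Group G] [Fintype G] :
    Filter.Tendsto
      (fun n : ℕ =>
        (alphaOrbits G n : ℝ) /
          ((Nat.card (Subgroup.center G) : ℝ) * (Nat.card G : ℝ) ^ (n - 1)))
      Filter.atTop (nhds 1) := by
  have hsum := tendsto_sum_pow_atTop_card_eq_one Finset.univ
    (x := fun g : G => (Nat.card (Subgroup.centralizer {g}) : ℝ) / Nat.card G)
    (fun g _ => by positivity)
    (fun g _ => div_le_one_of_le₀ (mod_cast Subgroup.card_le_card_group _) (by positivity))
  rw [card_filter_card_centralizer_div_eq_one] at hsum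
  have hz : (Nat.card (Subgroup.center G) : ℝ) ≠ 0 := mod_cast Nat.card_pos.ne'
  have hlim := hsum.div_const (Nat.card (Subgroup.center G) : ℝ)
  rw [div_self hz] at hlim
  refine hlim.congr' ?_
  filter_upwards [eventually_ge_atTop 1] with n hn
  rw [mul_comm, ← div_div, alphaOrbits_div_card_pow G hn]
end

section
/- Let G be a finite p-group of order p^m with |G/Z(G)| = p². Then the number of conjugacy classes of G is p^{m−2} + p^{m−1} − p^{m−3}, and β_{G,n} satisfies the recurrence β_{G,n} = p^{m−2} β_{G,n−1} + (p^{m−1} − p^{m−3}) p^{(m−1)(n−1)} for n ≥ 1; equivalently B_G(t) = (1 − p^{m−3}t)/((1 − p^{m−2}t)(1 − p^{m−1}t)). -/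
section Aux

variable {G : Type*} [Group G]

lemma subtype_commute {H : Subgroup G} {a b : H} (h : Commute (a : G) (b : G)) : Commute a b :=
  Subtype.ext h

/-- The basic decomposition equiv. -/
def commTuplesSuccEquiv (n : ℕ) :
    commTuples G (n+1) ≃ Σ g : G, commTuples (Subgroup.centralizer {g} : Subgroup G) n where
  toFun x := ⟨(x : Fin (n+1) → G) 0,
    ⟨fun i => ⟨(x : Fin (n+1) → G) i.succ,
        Subgroup.mem_centralizer_singleton_iff.2 (x.2 i.succ 0)⟩,
      fun i j => subtype_commute (x.2 i.succ j.succ)⟩⟩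
  invFun y := ⟨Fin.cons y.1 (fun i => (y.2.1 i : G)), by
    intro i j
    refine Fin.cases ?_ ?_ i <;> [skip; intro i'] <;> refine Fin.cases ?_ ?_ j <;> try intro j'
    · simp [Commute.refl]
    · simpa [Commute, SemiconjBy] using (Subgroup.mem_centralizer_singleton_iff.1 (y.2.1 j').2).symm
    · simpa [Commute, SemiconjBy] using (Subgroup.mem_centralizer_singleton_iff.1 (y.2.1 i').2)
    · simpa [Commute, SemiconjBy] using congrArg Subtype.val (y.2.2 i' j')⟩
  left_inv x := by
    apply Subtype.ext
    funext i
    refine Fin.cases ?_ ?_ i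
    · simp
    · intro i'; simp
  right_inv y := by
    rcases y with ⟨g, y⟩
    refine Sigma.ext ?_ ?_
    · simp
    · simp only [Fin.cons_zero]
      apply heq_of_eq
      apply Subtype.ext
      funext i
      apply Subtype.ext
      simp

/-- Transport commuting tuples along a group isomorphism. -/
def commTuplesCongr {H : Type*} [Group H] (e : H ≃* G) (n : ℕ) :
    ↥(commTuples H n) ≃ ↥(commTuples G n) where
  toFun x := ⟨fun i => e (x.1 i), fun i j => (x.2 i j).map e.toMonoidHom⟩
  invFun y := ⟨fun i => e.symm (y.1 i), fun i j => (y.2 i j).map e.symm.toMonoidHom⟩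
  left_inv x := by apply Subtype.ext; funext i; simp
  right_inv y := by apply Subtype.ext; funext i; simp

lemma card_commTuples_of_comm {H : Type*} [Group H] [Finite H]
    (h : ∀ a b : H, Commute a b) (n : ℕ) :
    Nat.card ↥(commTuples H n) = Nat.card H ^ n := by
  have e : ↥(commTuples H n) ≃ (Fin n → H) :=
    ⟨fun x => x.1, fun y => ⟨y, fun i j => h _ _⟩, fun x => rfl, fun y => rfl⟩
  rw [Nat.card_congr e, Nat.card_fun, Nat.card_eq_fintype_card (α := Fin n), Fintype.card_fin]

lemma card_commTuples_succ [Fintype G] (n : ℕ) :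
    Nat.card ↥(commTuples G (n+1)) =
      ∑ g : G, Nat.card ↥(commTuples (Subgroup.centralizer {g} : Subgroup G) n) := by
  classical
  rw [Nat.card_congr (commTuplesSuccEquiv n)]
  letI : ∀ g : G, Fintype ↥(commTuples (Subgroup.centralizer {g} : Subgroup G) n) :=
    fun g => Fintype.ofFinite _
  rw [Nat.card_eq_fintype_card, Fintype.card_sigma]
  exact Finset.sum_congr rfl fun g _ => (Nat.card_eq_fintype_card).symm

lemma smul_fixed_iff {n : ℕ} {u : ConjAct G} {x : ↥(commTuples G n)} :
    u • x = x ↔ ∀ i, x.1 i ∈ Subgroup.centralizer {ConjAct.ofConjAct u} := by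
  rw [Subtype.ext_iff, funext_iff]
  refine forall_congr' fun i => ?_
  rw [SubMulAction.val_smul, Pi.smul_apply, ConjAct.smul_def,
    Subgroup.mem_centralizer_singleton_iff, mul_inv_eq_iff_eq_mul]
  exact eq_comm

lemma fixedBy_central {n : ℕ} {u : ConjAct G} (hu : ConjAct.ofConjAct u ∈ Subgroup.center G) :
    MulAction.fixedBy ↥(commTuples G n) u = Set.univ := by
  ext x
  simp only [Set.mem_univ, iff_true, MulAction.mem_fixedBy]
  rw [smul_fixed_iff]
  intro i
  exact Subgroup.mem_centralizer_singleton_iff.2 ((Subgroup.mem_center_iff.1 hu) _)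

noncomputable def fixedByEquiv {n : ℕ} (u : ConjAct G)
    (habel : ∀ a b : ↥(Subgroup.centralizer {ConjAct.ofConjAct u}), Commute a b) :
    MulAction.fixedBy ↥(commTuples G n) u ≃
      (Fin n → ↥(Subgroup.centralizer {ConjAct.ofConjAct u})) where
  toFun x := fun i => ⟨x.1.1 i, smul_fixed_iff.1 x.2 i⟩
  invFun y := ⟨⟨fun i => (y i : G), fun i j => congrArg Subtype.val (habel (y i) (y j))⟩,
    smul_fixed_iff.2 fun i => (y i).2⟩
  left_inv x := by apply Subtype.ext; apply Subtype.ext; rfl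
  right_inv y := by funext i; apply Subtype.ext; rfl

lemma sum_ite_center [Fintype G] (A B : ℕ) [DecidablePred (· ∈ Subgroup.center G)] :
    ∑ g : G, (if g ∈ Subgroup.center G then A else B) =
      Nat.card (Subgroup.center G) * A + (Nat.card G - Nat.card (Subgroup.center G)) * B := by
  classical
  rw [Finset.sum_ite, Finset.sum_const, Finset.sum_const, smul_eq_mul, smul_eq_mul]
  have h1 : (Finset.univ.filter (fun g : G => g ∈ Subgroup.center G)).card
      = Nat.card (Subgroup.center G) := by
    rw [Nat.card_eq_fintype_card, Fintype.card_subtype]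
  have h2 := Finset.card_filter_add_card_filter_not
    (s := (Finset.univ : Finset G)) (p := fun g : G => g ∈ Subgroup.center G)
  rw [h1]
  have h3 : (Finset.univ : Finset G).card = Nat.card G := by
    rw [Nat.card_eq_fintype_card, Finset.card_univ]
  congr 1
  congr 1
  have hle : Nat.card (Subgroup.center G) ≤ Nat.card G :=
    Nat.le_of_dvd Nat.card_pos (Subgroup.card_subgroup_dvd_card _)
  omega

lemma beta_mul_card [Fintype G] (n : ℕ) (c : ℕ)
    (hc : ∀ g : G, g ∉ Subgroup.center G →
      (∀ a b : ↥(Subgroup.centralizer {g}), Commute a b) ∧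
        Nat.card ↥(Subgroup.centralizer {g}) = c) :
    betaOrbits G n * Nat.card G =
      Nat.card (Subgroup.center G) * Nat.card ↥(commTuples G n)
        + (Nat.card G - Nat.card (Subgroup.center G)) * c ^ n := by
  classical
  letI : ∀ u : ConjAct G, Fintype (MulAction.fixedBy ↥(commTuples G n) u) :=
    fun u => Fintype.ofFinite _
  letI : Fintype (Quotient (MulAction.orbitRel (ConjAct G) ↥(commTuples G n))) :=
    Fintype.ofFinite _
  have hb := MulAction.sum_card_fixedBy_eq_card_orbits_mul_card_group
    (ConjAct G) ↥(commTuples G n)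
  have hterm : ∀ u : ConjAct G, Fintype.card (MulAction.fixedBy ↥(commTuples G n) u) =
      if ConjAct.ofConjAct u ∈ Subgroup.center G then Nat.card ↥(commTuples G n) else c ^ n := by
    intro u
    split_ifs with h
    · rw [← Nat.card_eq_fintype_card, fixedBy_central h]
      exact Nat.card_congr (Equiv.Set.univ _)
    · obtain ⟨habel, hcard⟩ := hc (ConjAct.ofConjAct u) h
      rw [← Nat.card_eq_fintype_card, Nat.card_congr (fixedByEquiv u habel), Nat.card_fun,
        hcard, Nat.card_eq_fintype_card, Fintype.card_fin]
  rw [Finset.sum_congr rfl (fun u _ => hterm u)] at hb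
  have hsum : ∑ u : ConjAct G,
      (if ConjAct.ofConjAct u ∈ Subgroup.center G then Nat.card ↥(commTuples G n) else c ^ n)
      = ∑ g : G, (if g ∈ Subgroup.center G then Nat.card ↥(commTuples G n) else c ^ n) := by
    refine (Fintype.sum_equiv ConjAct.toConjAct.toEquiv _ _ fun g => ?_).symm
    simp
  rw [hsum, sum_ite_center] at hb
  have hcg : Fintype.card (ConjAct G) = Nat.card G :=
    (Nat.card_eq_fintype_card).symm.trans (Nat.card_congr ConjAct.ofConjAct.toEquiv)
  rw [betaOrbits, Nat.card_eq_fintype_card, ← hcg, ← hb, hcg]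

lemma fixedBy_eq_centralizer (u : ConjAct G) :
    MulAction.fixedBy G u = ↑(Subgroup.centralizer {ConjAct.ofConjAct u}) := by
  ext x
  rw [MulAction.mem_fixedBy, ConjAct.smul_def, SetLike.mem_coe,
    Subgroup.mem_centralizer_singleton_iff, mul_inv_eq_iff_eq_mul]
  exact eq_comm

lemma centralizer_central {g : G} (h : g ∈ Subgroup.center G) :
    Subgroup.centralizer {g} = ⊤ := by
  rw [Subgroup.eq_top_iff']
  intro x
  exact Subgroup.mem_centralizer_singleton_iff.2 (Subgroup.mem_center_iff.1 h x)

noncomputable def conjClassesEquivOrbits :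
    Quotient (MulAction.orbitRel (ConjAct G) G) ≃ ConjClasses G :=
  Quotient.congrRight fun a b => Iff.of_eq (congrFun₂ ConjAct.orbitRel_conjAct a b)

lemma conj_mul_card [Fintype G] (c : ℕ)
    (hc : ∀ g : G, g ∉ Subgroup.center G → Nat.card ↥(Subgroup.centralizer {g}) = c) :
    Nat.card (ConjClasses G) * Nat.card G =
      Nat.card (Subgroup.center G) * Nat.card G
        + (Nat.card G - Nat.card (Subgroup.center G)) * c := by
  classical
  letI : ∀ u : ConjAct G, Fintype (MulAction.fixedBy G u) := fun u => Fintype.ofFinite _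
  letI : Fintype (Quotient (MulAction.orbitRel (ConjAct G) G)) := Fintype.ofFinite _
  have hb := MulAction.sum_card_fixedBy_eq_card_orbits_mul_card_group (ConjAct G) G
  have hterm : ∀ u : ConjAct G, Fintype.card (MulAction.fixedBy G u) =
      if ConjAct.ofConjAct u ∈ Subgroup.center G then Nat.card G else c := by
    intro u
    rw [← Nat.card_eq_fintype_card, Nat.card_congr (Equiv.setCongr (fixedBy_eq_centralizer u))]
    split_ifs with h
    · rw [centralizer_central h]
      exact Subgroup.card_top
    · exact hc _ h
  rw [Finset.sum_congr rfl (fun u _ => hterm u)] at hb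
  have hsum : ∑ u : ConjAct G,
      (if ConjAct.ofConjAct u ∈ Subgroup.center G then Nat.card G else c)
      = ∑ g : G, (if g ∈ Subgroup.center G then Nat.card G else c) := by
    refine (Fintype.sum_equiv ConjAct.toConjAct.toEquiv _ _ fun g => ?_).symm
    simp
  rw [hsum, sum_ite_center] at hb
  have hcg : Fintype.card (ConjAct G) = Nat.card G :=
    (Nat.card_eq_fintype_card).symm.trans (Nat.card_congr ConjAct.ofConjAct.toEquiv)
  have hcc : Nat.card (ConjClasses G)
      = Fintype.card (Quotient (MulAction.orbitRel (ConjAct G) G)) := by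
    rw [← Nat.card_eq_fintype_card]
    exact (Nat.card_congr conjClassesEquivOrbits).symm
  rw [hcc, ← hcg, ← hb, hcg]

end Aux

/-- For a `p`-group of order `p^m` with center of index `p²`: the number of conjugacy
classes is `p^{m-2} + p^{m-1} - p^{m-3}`, and
`β_{G,n} = p^{m-2} β_{G,n-1} + (p^{m-1} - p^{m-3}) p^{(m-1)(n-1)}` for `n ≥ 1`. -/
theorem center_index_p_sq_beta (G : Type*) [Group G] [Fintype G] (p m : ℕ) (hp : p.Prime)
    (hcard : Nat.card G = p ^ m) (hZ : (Subgroup.center G).index = p ^ 2) :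
    Nat.card (ConjClasses G) = p ^ (m - 2) + p ^ (m - 1) - p ^ (m - 3) ∧
      ∀ n : ℕ, 1 ≤ n →
        betaOrbits G n =
          p ^ (m - 2) * betaOrbits G (n - 1) +
            (p ^ (m - 1) - p ^ (m - 3)) * p ^ ((m - 1) * (n - 1)) := by
  classical
  have hp1 : 1 < p := hp.one_lt
  have hZcard : Nat.card (Subgroup.center G) * p ^ 2 = p ^ m := by
    rw [← hZ, ← hcard]; exact Subgroup.card_mul_index _
  have hm2 : 2 ≤ m := by
    have hdvd : p ^ 2 ∣ p ^ m := Dvd.intro_left _ hZcard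
    exact (Nat.pow_dvd_pow_iff_le_right hp1).1 hdvd
  have hZc : Nat.card (Subgroup.center G) = p ^ (m - 2) := by
    have h : p ^ (m - 2) * p ^ 2 = p ^ m := by
      rw [← pow_add]; congr 1; omega
    exact Nat.eq_of_mul_eq_mul_right (by positivity) (hZcard.trans h.symm)
  have hm3 : 3 ≤ m := by
    by_contra h
    have hm : m = 2 := by omega
    have h1 : Nat.card (Subgroup.center G) = 1 := by
      rw [hZc, hm]; simp
    haveI := Fact.mk hp
    haveI hnt : Nontrivial G := by
      rw [← Finite.one_lt_card_iff_nontrivial, hcard, hm]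
      exact Nat.one_lt_pow (by decide) hp1
    have hpg : IsPGroup p G := IsPGroup.of_card hcard
    have := IsPGroup.center_nontrivial hpg
    exact absurd h1 (Finite.one_lt_card_iff_nontrivial.2 this).ne'
  obtain ⟨k, rfl⟩ : ∃ k, m = k + 3 := ⟨m - 3, by omega⟩
  have e2 : k + 3 - 2 = k + 1 := by omega
  have e1 : k + 3 - 1 = k + 2 := by omega
  have e3 : k + 3 - 3 = k := by omega
  rw [e2] at hZc
  -- centralizer structure for noncentral elements
  have hcent : ∀ g : G, g ∉ Subgroup.center G →
      (∀ a b : ↥(Subgroup.centralizer {g}), Commute a b) ∧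
        Nat.card ↥(Subgroup.centralizer {g}) = p ^ (k + 2) := by
    intro g hg
    set C := Subgroup.centralizer ({g} : Set G) with hC
    have hZC : Subgroup.center G ≤ C := Subgroup.center_le_centralizer _
    have hgC : g ∈ C := Subgroup.mem_centralizer_singleton_iff.2 rfl
    have hidx_dvd : C.index ∣ p ^ 2 := hZ ▸ Subgroup.index_dvd_of_le hZC
    have hCne : C ≠ ⊤ := by
      intro h
      apply hg
      rw [Subgroup.mem_center_iff]
      intro x
      have hx : x ∈ C := h ▸ Subgroup.mem_top x
      exact Subgroup.mem_centralizer_singleton_iff.1 hx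
    have hidx_ne1 : C.index ≠ 1 := fun h => hCne (Subgroup.index_eq_one.1 h)
    have hidx : C.index = p := by
      obtain ⟨i, hi2, hieq⟩ := (Nat.dvd_prime_pow hp).1 hidx_dvd
      interval_cases i
      · rw [pow_zero] at hieq; exact absurd hieq hidx_ne1
      · simpa using hieq
      · exfalso
        have hCcard : Nat.card C * p ^ 2 = p ^ (k + 3) := by
          rw [← hieq, ← hcard]; exact Subgroup.card_mul_index _
        have : Nat.card C = Nat.card (Subgroup.center G) :=
          Nat.eq_of_mul_eq_mul_right (by positivity) (hCcard.trans hZcard.symm)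
        have hZeq : Subgroup.center G = C :=
          Subgroup.eq_of_le_of_card_ge hZC (le_of_eq this)
        exact hg (hZeq ▸ hgC)
    have hCcard : Nat.card C = p ^ (k + 2) := by
      have h1 : Nat.card C * p = p ^ (k + 3) := by
        rw [← hcard]
        calc Nat.card C * p = Nat.card C * C.index := by rw [hidx]
          _ = Nat.card G := Subgroup.card_mul_index _
      have h2 : p ^ (k + 2) * p = p ^ (k + 3) := by rw [← pow_succ]
      exact Nat.eq_of_mul_eq_mul_right hp.pos (h1.trans h2.symm)
    refine ⟨?_, hCcard⟩
    -- C = Z ⊔ ⟨g⟩, hence abelian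
    have hcommZ : ∀ z ∈ Subgroup.center G, ∀ x : G, Commute z x :=
      fun z hz x => (Subgroup.mem_center_iff.1 hz x).symm
    set K := Subgroup.center G ⊔ Subgroup.zpowers g with hK
    have hKC : K ≤ C := sup_le hZC (Subgroup.zpowers_le.2 hgC)
    have hgK : g ∈ K := Subgroup.mem_sup_right (Subgroup.mem_zpowers g)
    have hKcard : Nat.card K = p ^ (k + 2) := by
      have hd2 : Nat.card K ∣ p ^ (k + 2) := hCcard ▸ Subgroup.card_dvd_of_le hKC
      obtain ⟨j, hj, hjeq⟩ := (Nat.dvd_prime_pow hp).1 hd2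
      have hd1 : p ^ (k + 1) ∣ p ^ j := by
        rw [← hjeq, ← hZc]; exact Subgroup.card_dvd_of_le le_sup_left
      have hj1 : k + 1 ≤ j := (Nat.pow_dvd_pow_iff_le_right hp1).1 hd1
      have hjne : j ≠ k + 1 := by
        intro h
        have hcardeq : Nat.card K ≤ Nat.card (Subgroup.center G) := by
          rw [hjeq, h, hZc]
        have hZeq : Subgroup.center G = K :=
          Subgroup.eq_of_le_of_card_ge le_sup_left hcardeq
        exact hg (hZeq ▸ hgK)
      have : j = k + 2 := by omega
      rw [hjeq, this]
    have hKC' : K = C := Subgroup.eq_of_le_of_card_ge hKC (le_of_eq (hCcard.trans hKcard.symm))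
    have hmemK : ∀ x : G, x ∈ K → ∃ z ∈ Subgroup.center G, ∃ t : ℤ, x = z * g ^ t := by
      intro x hx
      rw [hK, ← SetLike.mem_coe, Subgroup.normal_mul] at hx
      obtain ⟨z, hz, w, hw, rfl⟩ := hx
      obtain ⟨t, rfl⟩ := Subgroup.mem_zpowers_iff.1 hw
      exact ⟨z, hz, t, rfl⟩
    intro a b
    apply subtype_commute
    obtain ⟨z1, hz1, t1, h1⟩ := hmemK (a : G) (by rw [hKC']; exact a.2)
    obtain ⟨z2, hz2, t2, h2⟩ := hmemK (b : G) (by rw [hKC']; exact b.2)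
    rw [h1, h2]
    have cz1 : Commute z1 (z2 * g ^ t2) := hcommZ z1 hz1 _
    have cg : Commute (g ^ t1) (z2 * g ^ t2) :=
      Commute.mul_right ((hcommZ z2 hz2 (g ^ t1)).symm) ((Commute.refl g).zpow_zpow t1 t2)
    exact cz1.mul_left cg
  -- counting commuting tuples
  have hCn : ∀ n' : ℕ, Nat.card ↥(commTuples G (n' + 1)) =
      p ^ (k + 1) * Nat.card ↥(commTuples G n')
        + (p ^ (k + 3) - p ^ (k + 1)) * (p ^ (k + 2)) ^ n' := by
    intro n'
    rw [card_commTuples_succ]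
    have hterm : ∀ g : G, Nat.card ↥(commTuples (Subgroup.centralizer {g} : Subgroup G) n') =
        if g ∈ Subgroup.center G then Nat.card ↥(commTuples G n') else (p ^ (k + 2)) ^ n' := by
      intro g
      split_ifs with h
      · rw [centralizer_central h]
        exact Nat.card_congr (commTuplesCongr Subgroup.topEquiv n')
      · obtain ⟨habel, hcard'⟩ := hcent g h
        rw [card_commTuples_of_comm habel, hcard']
    rw [Finset.sum_congr rfl (fun g _ => hterm g), sum_ite_center, hZc, hcard]
  -- Burnside for beta
  have hbeta : ∀ n : ℕ, betaOrbits G n * p ^ (k + 3) =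
      p ^ (k + 1) * Nat.card ↥(commTuples G n)
        + (p ^ (k + 3) - p ^ (k + 1)) * (p ^ (k + 2)) ^ n := by
    intro n
    have := beta_mul_card n (p ^ (k + 2)) hcent
    rwa [hcard, hZc] at this
  constructor
  · -- conjugacy class count
    have hcc := conj_mul_card (p ^ (k + 2)) (fun g hg => (hcent g hg).2)
    rw [hcard, hZc] at hcc
    rw [e1, e2, e3]
    have hkey : (p ^ (k + 1) + p ^ (k + 2) - p ^ k) * p ^ (k + 3)
        = p ^ (k + 1) * p ^ (k + 3) + (p ^ (k + 3) - p ^ (k + 1)) * p ^ (k + 2) := by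
      rw [Nat.sub_mul, Nat.sub_mul, Nat.add_mul, ← pow_add, ← pow_add, ← pow_add, ← pow_add,
        ← pow_add]
      have ea : k + 1 + (k + 3) = 2 * k + 4 := by ring
      have eb : k + 2 + (k + 3) = 2 * k + 5 := by ring
      have ec : k + (k + 3) = 2 * k + 3 := by ring
      have ed : k + 3 + (k + 2) = 2 * k + 5 := by ring
      have ee : k + 1 + (k + 2) = 2 * k + 3 := by ring
      rw [ea, eb, ec, ed, ee]
      have hle : p ^ (2 * k + 3) ≤ p ^ (2 * k + 5) := Nat.pow_le_pow_right hp.pos (by omega)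
      omega
    exact Nat.eq_of_mul_eq_mul_right (by positivity) (hcc.trans hkey.symm)
  · -- recurrence
    intro n hn
    obtain ⟨n', rfl⟩ : ∃ n', n = n' + 1 := ⟨n - 1, by omega⟩
    rw [e1, e2, e3]
    simp only [Nat.add_sub_cancel]
    apply Nat.eq_of_mul_eq_mul_right (show 0 < p ^ (k + 3) by positivity)
    have h1 := hbeta (n' + 1)
    have h2 := hbeta n'
    have h3 := hCn n'
    -- C_{n'+1} = betaOrbits n' * p^(k+3)
    have hCeq : Nat.card ↥(commTuples G (n' + 1)) = betaOrbits G n' * p ^ (k + 3) := by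
      rw [h3, h2]
    have hDkey : (p ^ (k + 3) - p ^ (k + 1)) * p ^ (k + 2)
        = (p ^ (k + 2) - p ^ k) * p ^ (k + 3) := by
      rw [Nat.sub_mul, Nat.sub_mul, ← pow_add, ← pow_add, ← pow_add, ← pow_add]
      have ea : k + 3 + (k + 2) = 2 * k + 5 := by ring
      have eb : k + 1 + (k + 2) = 2 * k + 3 := by ring
      have ec : k + 2 + (k + 3) = 2 * k + 5 := by ring
      have ed : k + (k + 3) = 2 * k + 3 := by ring
      rw [ea, eb, ec, ed]
    have hpow : (p ^ (k + 2)) ^ (n' + 1) = p ^ (k + 2) * p ^ ((k + 2) * n') := by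
      rw [pow_succ', ← pow_mul]
    have hstep : (p ^ (k + 3) - p ^ (k + 1)) * (p ^ (k + 2) * p ^ ((k + 2) * n'))
        = ((p ^ (k + 2) - p ^ k) * p ^ ((k + 2) * n')) * p ^ (k + 3) := by
      rw [← mul_assoc, hDkey]
      ring
    rw [h1, hCeq, hpow, hstep]
    ring
end
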